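/- The univariate skew-t density ST(z; μ, σ², δ, ν) = 2 t(z; μ, σ²+δ², ν) T(z̃; 0, 1, ν+1), with z̃ = ((z−μ)δ/σ)·√((ν+1)/(ν(σ²+δ²)+(z−μ)²)), integrates to 1 over ℝ. -/

import Mathlib

/-!
The Student t density `t(z; μ, σ² + δ², ν)` is symmetric about `μ`, the argument `z̃` is
odd about `μ`, and `T(-x) = 1 - T(x)`. Hence the reflection `z ↦ 2μ - z` turns `ST` into
`2t - ST`, so `∫ ST = ∫ t = 1`. The normalisation of `t` reduces to
`∫ (1 + x²)^(-a) dx = √π Γ(a - 1/2) / Γ(a)`, obtained by writing `(1 + x²)^(-a)` as the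
Gamma integral `Γ(a)⁻¹ ∫ s^(a-1) e^(-(1 + x²) s) ds` and integrating out `x` first
(Tonelli), which leaves a Gaussian integral in `x`.
-/

open MeasureTheory Real

/-- Student t PDF with location `μ`, squared scale `s2`, and `ν` degrees of freedom. -/
noncomputable def tPDF (μ s2 ν x : ℝ) : ℝ :=
  Real.Gamma ((ν + 1) / 2) / (Real.sqrt s2 * Real.sqrt (ν * Real.pi) * Real.Gamma (ν / 2)) *
    (1 + (x - μ) ^ 2 / (ν * s2)) ^ (-((ν + 1) / 2))

/-- CDF of the standard Student t-distribution with `ν` degrees of freedom. -/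
noncomputable def tCDF (ν x : ℝ) : ℝ := ∫ t in Set.Iic x, tPDF 0 1 ν t

/-- Univariate skew t PDF `ST(z; μ, σ², δ, ν) = 2 t(z; μ, σ²+δ², ν) T(z̃; 0, 1, ν+1)`
with `z̃ = ((z−μ)δ/σ)·√((ν+1)/(ν(σ²+δ²)+(z−μ)²))`. -/
noncomputable def stPDF (μ σ δ ν z : ℝ) : ℝ :=
  2 * tPDF μ (σ ^ 2 + δ ^ 2) ν z *
    tCDF (ν + 1) ((z - μ) * δ / σ * Real.sqrt ((ν + 1) / (ν * (σ ^ 2 + δ ^ 2) + (z - μ) ^ 2)))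

open Set Filter
open scoped ENNReal

lemma lintegral_rpow_mul_exp_neg_mul_Ioi {a r : ℝ} (ha : 0 < a) (hr : 0 < r) :
    ∫⁻ t in Ioi 0, ENNReal.ofReal (t ^ (a - 1) * exp (-(r * t))) =
      ENNReal.ofReal ((1 / r) ^ a * Gamma a) := by
  rw [← integral_rpow_mul_exp_neg_mul_Ioi ha hr, ofReal_integral_eq_lintegral_ofReal]
  · refine (integrableOn_rpow_mul_exp_neg_mul_rpow (s := a - 1) (p := 1) (by linarith) one_pos
      hr).congr_fun (fun t _ => ?_) measurableSet_Ioi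
    simp only [rpow_one, neg_mul]
  · filter_upwards [self_mem_ae_restrict measurableSet_Ioi] with t ht
    exact mul_nonneg (rpow_nonneg ht.le _) (exp_pos _).le

lemma lintegral_exp_neg_mul_sq {b : ℝ} (hb : 0 < b) :
    ∫⁻ x : ℝ, ENNReal.ofReal (exp (-(b * x ^ 2))) = ENNReal.ofReal √(π / b) := by
  rw [← ofReal_integral_eq_lintegral_ofReal]
  · simpa only [neg_mul] using congrArg ENNReal.ofReal (integral_gaussian b)
  · simpa only [neg_mul] using integrable_exp_neg_mul_sq hb
  · exact Eventually.of_forall fun x => (exp_pos _).le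

lemma lintegral_one_add_sq_rpow_neg {a : ℝ} (ha : 1 / 2 < a) :
    ∫⁻ x : ℝ, ENNReal.ofReal ((1 + x ^ 2) ^ (-a)) =
      ENNReal.ofReal (√π * Gamma (a - 1 / 2) / Gamma a) := by
  have hΓ : 0 < Gamma a := Gamma_pos_of_pos (by linarith)
  have hΓ' : 0 < Gamma (a - 1 / 2) := Gamma_pos_of_pos (by linarith)
  set F : ℝ → ℝ → ℝ≥0∞ := fun x t =>
    ENNReal.ofReal (t ^ (a - 1) * exp (-((1 + x ^ 2) * t)))
  have gamma_repr (x : ℝ) :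
      ENNReal.ofReal ((1 + x ^ 2) ^ (-a)) =
        ENNReal.ofReal (Gamma a)⁻¹ * ∫⁻ t in Ioi 0, F x t := by
    have hx : 0 < 1 + x ^ 2 := by positivity
    rw [lintegral_rpow_mul_exp_neg_mul_Ioi (by linarith) hx, ← ENNReal.ofReal_mul (by positivity),
      one_div, inv_rpow hx.le, ← rpow_neg hx.le]
    congr 1
    field_simp
  have gaussian (t : ℝ) (ht : t ∈ Ioi 0) :
      ∫⁻ x, F x t =
        ENNReal.ofReal √π * ENNReal.ofReal (t ^ (a - 1 / 2 - 1) * exp (-(1 * t))) := by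
    have ht : 0 < t := ht
    have split (x : ℝ) : F x t = ENNReal.ofReal (t ^ (a - 1) * exp (-t)) *
        ENNReal.ofReal (exp (-(t * x ^ 2))) := by
      simp only [F]
      rw [← ENNReal.ofReal_mul (by positivity), mul_assoc, ← exp_add]
      ring_nf
    have half_power : t ^ (a - 1 / 2 - 1) = t ^ (a - 1) / √t := by
      rw [sqrt_eq_rpow, ← rpow_sub ht]
      ring_nf
    rw [lintegral_congr split, lintegral_const_mul _ (by fun_prop), lintegral_exp_neg_mul_sq ht,
      ← ENNReal.ofReal_mul (by positivity), ← ENNReal.ofReal_mul (by positivity), half_power,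
      sqrt_div' _ ht.le, one_mul]
    congr 1
    ring
  calc ∫⁻ x : ℝ, ENNReal.ofReal ((1 + x ^ 2) ^ (-a))
      = ENNReal.ofReal (Gamma a)⁻¹ * ∫⁻ x, ∫⁻ t in Ioi 0, F x t := by
        simp_rw [gamma_repr]
        exact lintegral_const_mul _ (by fun_prop)
    _ = ENNReal.ofReal (Gamma a)⁻¹ * ∫⁻ t in Ioi 0, ∫⁻ x, F x t := by
        rw [lintegral_lintegral_swap (by fun_prop)]
    _ = ENNReal.ofReal (Gamma a)⁻¹ *
          (ENNReal.ofReal √π * ENNReal.ofReal (Gamma (a - 1 / 2))) := by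
        rw [setLIntegral_congr_fun measurableSet_Ioi gaussian, lintegral_const_mul _ (by fun_prop),
          lintegral_rpow_mul_exp_neg_mul_Ioi (by linarith) one_pos, div_one, one_rpow, one_mul]
    _ = ENNReal.ofReal (√π * Gamma (a - 1 / 2) / Gamma a) := by
        rw [← ENNReal.ofReal_mul (by positivity), ← ENNReal.ofReal_mul (by positivity)]
        ring_nf

lemma integrable_one_add_sq_rpow_neg {a : ℝ} (ha : 1 / 2 < a) :
    Integrable fun x : ℝ => (1 + x ^ 2) ^ (-a) := by
  have h := integrable_rpow_neg_one_add_norm_sq (E := ℝ) (μ := volume) (r := 2 * a)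
    (by rw [Module.finrank_self]; push_cast; linarith)
  simpa only [norm_eq_abs, sq_abs, neg_mul, neg_div, mul_div_cancel_left₀ a two_ne_zero] using h

lemma integral_one_add_sq_rpow_neg {a : ℝ} (ha : 1 / 2 < a) :
    ∫ x : ℝ, (1 + x ^ 2) ^ (-a) = √π * Gamma (a - 1 / 2) / Gamma a := by
  have hΓ : 0 < Gamma a := Gamma_pos_of_pos (by linarith)
  have hΓ' : 0 < Gamma (a - 1 / 2) := Gamma_pos_of_pos (by linarith)
  rw [integral_eq_lintegral_of_nonneg_ae (Eventually.of_forall fun x => by positivity)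
    (integrable_one_add_sq_rpow_neg ha).aestronglyMeasurable, lintegral_one_add_sq_rpow_neg ha,
    ENNReal.toReal_ofReal (by positivity)]

section StudentT

variable {μ s2 ν : ℝ}

lemma tPDF_eq_const_mul (hs2 : 0 < s2) (hν : 0 < ν) (x : ℝ) :
    tPDF μ s2 ν x =
      Gamma ((ν + 1) / 2) / (√s2 * √(ν * π) * Gamma (ν / 2)) *
        (1 + ((x - μ) / √(ν * s2)) ^ 2) ^ (-((ν + 1) / 2)) := by
  rw [tPDF, div_pow, sq_sqrt (by positivity)]

lemma tPDF_nonneg (hs2 : 0 < s2) (hν : 0 < ν) (x : ℝ) : 0 ≤ tPDF μ s2 ν x := by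
  have : 0 < Gamma ((ν + 1) / 2) := Gamma_pos_of_pos (by linarith)
  have : 0 < Gamma (ν / 2) := Gamma_pos_of_pos (by linarith)
  rw [tPDF_eq_const_mul hs2 hν]
  positivity

lemma tPDF_two_mul_sub (x : ℝ) : tPDF μ s2 ν (2 * μ - x) = tPDF μ s2 ν x := by
  rw [tPDF, tPDF, show 2 * μ - x - μ = -(x - μ) by ring, neg_sq]

lemma integrable_tPDF (hs2 : 0 < s2) (hν : 0 < ν) : Integrable (tPDF μ s2 ν) := by
  have hc : 0 < √(ν * s2) := sqrt_pos.2 (by positivity)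
  rw [funext (tPDF_eq_const_mul hs2 hν)]
  exact (((integrable_one_add_sq_rpow_neg (by linarith)).comp_div hc.ne').comp_sub_right
    μ).const_mul _

lemma integral_tPDF (hs2 : 0 < s2) (hν : 0 < ν) : ∫ x, tPDF μ s2 ν x = 1 := by
  have hc : 0 < √(ν * s2) := sqrt_pos.2 (by positivity)
  have : 0 < Gamma ((ν + 1) / 2) := Gamma_pos_of_pos (by linarith)
  have : 0 < Gamma (ν / 2) := Gamma_pos_of_pos (by linarith)
  simp_rw [tPDF_eq_const_mul hs2 hν]
  rw [integral_const_mul,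
    integral_sub_right_eq_self (fun x => (1 + (x / √(ν * s2)) ^ 2) ^ (-((ν + 1) / 2))) μ,
    Measure.integral_comp_div (fun x => (1 + x ^ 2) ^ (-((ν + 1) / 2))),
    integral_one_add_sq_rpow_neg (by linarith), smul_eq_mul, abs_of_pos hc,
    show (ν + 1) / 2 - 1 / 2 = ν / 2 by ring, sqrt_mul hν.le, sqrt_mul hν.le]
  have : 0 < √ν := sqrt_pos.2 hν
  have : 0 < √s2 := sqrt_pos.2 hs2
  have : 0 < √π := sqrt_pos.2 pi_pos
  field_simp

end StudentT

lemma integral_Iic_neg_of_even {f : ℝ → ℝ} (hf : Integrable f) (heven : ∀ x, f (-x) = f x)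
    (c : ℝ) : ∫ x in Iic (-c), f x = (∫ x, f x) - ∫ x in Iic c, f x := by
  have tail : ∫ x in Iic (-c), f x = ∫ x in Ioi c, f x := by
    rw [← integral_comp_neg_Ioi]
    simp only [heven]
  rw [tail, ← integral_add_compl measurableSet_Iic hf, compl_Iic]
  ring

section StudentTCDF

variable {ν : ℝ}

lemma tCDF_nonneg (hν : 0 < ν) (x : ℝ) : 0 ≤ tCDF ν x :=
  setIntegral_nonneg measurableSet_Iic fun t _ => tPDF_nonneg one_pos hν t

lemma tCDF_le_one (hν : 0 < ν) (x : ℝ) : tCDF ν x ≤ 1 :=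
  (setIntegral_le_integral (integrable_tPDF one_pos hν)
    (Eventually.of_forall (tPDF_nonneg one_pos hν))).trans_eq (integral_tPDF one_pos hν)

lemma measurable_tCDF (hν : 0 < ν) : Measurable (tCDF ν) :=
  Monotone.measurable fun _ _ hxy => setIntegral_mono_set (integrable_tPDF one_pos hν).integrableOn
    (Eventually.of_forall (tPDF_nonneg one_pos hν)) (Iic_subset_Iic.2 hxy).eventuallyLE

lemma tCDF_neg (hν : 0 < ν) (x : ℝ) : tCDF ν (-x) = 1 - tCDF ν x := by
  rw [tCDF, tCDF, integral_Iic_neg_of_even (integrable_tPDF one_pos hν)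
    (fun t => by simpa using tPDF_two_mul_sub (μ := 0) (s2 := 1) (ν := ν) t),
    integral_tPDF one_pos hν]

end StudentTCDF

lemma two_mul_integral_mul_comp_eq_integral {f G w : ℝ → ℝ} (c : ℝ) (hf : Integrable f)
    (hfG : Integrable fun z => f z * G (w z)) (hf_refl : ∀ z, f (2 * c - z) = f z)
    (hw_refl : ∀ z, w (2 * c - z) = -w z) (hG : ∀ x, G (-x) = 1 - G x) :
    2 * ∫ z, f z * G (w z) = ∫ z, f z := by
  have reflect :
      ∫ z, f (2 * c - z) * G (w (2 * c - z)) = (∫ z, f z) - ∫ z, f z * G (w z) := by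
    simp_rw [hf_refl, hw_refl, hG, mul_sub, mul_one]
    exact integral_sub hf hfG
  rw [integral_sub_left_eq_self (fun z => f z * G (w z)) volume (2 * c)] at reflect
  linarith

/-- the univariate skew t density integrates to one. -/
theorem stmt_11 (μ σ δ ν : ℝ) (hσ : 0 < σ) (hν : 0 < ν) :
    ∫ z : ℝ, stPDF μ σ δ ν z = 1 := by
  have hs2 : 0 < σ ^ 2 + δ ^ 2 := by positivity
  have hν1 : 0 < ν + 1 := by linarith
  set w : ℝ → ℝ := fun z =>
    (z - μ) * δ / σ * √((ν + 1) / (ν * (σ ^ 2 + δ ^ 2) + (z - μ) ^ 2))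
  have hw_refl (z : ℝ) : w (2 * μ - z) = -w z := by
    simp only [w, show 2 * μ - z - μ = -(z - μ) by ring, neg_sq]
    ring
  have hfG : Integrable fun z => tPDF μ (σ ^ 2 + δ ^ 2) ν z * tCDF (ν + 1) (w z) :=
    (integrable_tPDF hs2 hν).mul_bdd
      ((measurable_tCDF hν1).comp (by fun_prop)).aestronglyMeasurable
      (Eventually.of_forall fun z => by
        rw [norm_of_nonneg (tCDF_nonneg hν1 _)]
        exact tCDF_le_one hν1 _)
  simp_rw [stPDF, mul_assoc, integral_const_mul]
  rw [two_mul_integral_mul_comp_eq_integral μ (integrable_tPDF hs2 hν) hfG tPDF_two_mul_sub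
    hw_refl (tCDF_neg hν1), integral_tPDF hs2 hν]
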